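/- Let r- < r+ be positive real numbers and let f : ℝ → ℝ be twice continuously differentiable on [r-, r+] with f(r-) = f(r+) = 0, f(r) < 0 for all r in (r-, r+), f'(r-) ≠ 0 and f'(r+) ≠ 0, and set kappa+ := (1/2) * f'(r+). Let r : ℝ → (r-, r+) be a differentiable function satisfying r'(tau) = f(r(tau)) for all tau in ℝ. Then there exist a constant tau_L ≥ 0 and constants 0 < c ≤ C such that for all tau < -tau_L: c * exp(2*kappa+*tau) ≤ r+ - r(tau) ≤ C * exp(2*kappa+*tau) and c * exp(2*kappa+*tau) ≤ -f(r(tau)) ≤ C * exp(2*kappa+*tau). -/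

import Mathlib

/-!
With `κ = f'(r₊) > 0` and `u = r₊ - r`, Taylor's formula at `r₊` turns the equation into
`u' = κ u + O(u²)`. The solution decreases, and it cannot stay away from `r₊` as `τ → -∞`,
since it would then move at a speed bounded below; so `u → 0`. Once `u` is small, the
inequality `u' ≥ κ u / 2` gives `u = O(exp (κ τ / 2))`, hence `(log u - κ τ)' = O(u)` is
integrable at `-∞` and `log u - κ τ` stays bounded. Finally `-f(r) = u'` is comparable to `u`.
-/

open Set Filter Topology Real

lemma IsMaxOn.nonneg_of_hasDerivWithinAt_Ioo {f : ℝ → ℝ} {f' a b : ℝ} (hab : a < b)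
    (hmax : IsMaxOn f (Ioo a b) b) (hf : HasDerivWithinAt f f' (Ioo a b) b) : 0 ≤ f' := by
  have : (𝓝[Ioo a b] b).NeBot := right_nhdsWithin_Ioo_neBot hab
  refine ge_of_tendsto ((hasDerivWithinAt_iff_tendsto_slope' (by simp)).1 hf) ?_
  filter_upwards [self_mem_nhdsWithin] with s hs
  rw [slope_def_field]
  exact div_nonneg_of_nonpos (sub_nonpos.2 (hmax hs)) (sub_nonpos.2 hs.2.le)

lemma exists_abs_sub_sub_derivWithin_mul_le_sq {f : ℝ → ℝ} {a b : ℝ} (hab : a < b)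
    (hf : ContDiffOn ℝ 2 f (Icc a b)) :
    ∃ M, ∀ s ∈ Icc a b,
      |f s - f b - derivWithin f (Icc a b) b * (s - b)| ≤ M * (s - b) ^ 2 := by
  set F := derivWithin f (Icc a b)
  have hF : ContDiffOn ℝ 1 F (Icc a b) := hf.derivWithin (uniqueDiffOn_Icc hab) (by norm_num)
  obtain ⟨K, hK⟩ := hF.exists_lipschitzOnWith one_ne_zero (convex_Icc a b) isCompact_Icc
  refine ⟨K, fun s hs => ?_⟩
  have hsub : Icc s b ⊆ Icc a b := Icc_subset_Icc_left hs.1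
  have hb : b ∈ Icc s b := right_mem_Icc.2 hs.2
  have hderiv : ∀ x ∈ Icc s b,
      HasDerivWithinAt (fun y => f y - F b * y) (F x - F b) (Icc s b) x := fun x hx =>
    ((hf.differentiableOn two_ne_zero x (hsub hx)).hasDerivWithinAt.mono hsub).sub
      (by simpa using (hasDerivWithinAt_id x _).const_mul (F b))
  have hbound : ∀ x ∈ Icc s b, ‖F x - F b‖ ≤ K * (b - s) := fun x hx =>
    calc ‖F x - F b‖ = dist (F x) (F b) := (dist_eq_norm _ _).symm
      _ ≤ K * dist x b := hK.dist_le_mul x (hsub hx) b (hsub hb)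
      _ ≤ K * (b - s) := by
        rw [Real.dist_eq, abs_of_nonpos (by linarith [hx.2])]
        gcongr
        linarith [hx.1]
  have hmvt := (convex_Icc s b).norm_image_sub_le_of_norm_hasDerivWithin_le hderiv hbound hb
    (left_mem_Icc.2 hs.2)
  calc |f s - f b - F b * (s - b)| = ‖(f s - F b * s) - (f b - F b * b)‖ := by
        rw [Real.norm_eq_abs]; ring_nf
    _ ≤ K * (b - s) * |s - b| := hmvt
    _ = K * (s - b) ^ 2 := by
        rw [abs_of_nonpos (by linarith [hs.2])]; ring

lemma monotoneOn_Iic_of_hasDerivAt_nonneg {g g' : ℝ → ℝ} {T : ℝ}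
    (hg : ∀ τ ≤ T, HasDerivAt g (g' τ) τ) (hg' : ∀ τ < T, 0 ≤ g' τ) : MonotoneOn g (Iic T) :=
  monotoneOn_of_hasDerivWithinAt_nonneg (convex_Iic T)
    (fun τ hτ => (hg τ hτ).continuousAt.continuousWithinAt)
    (fun τ hτ => (hg τ (interior_subset hτ : τ ∈ Iic T)).hasDerivWithinAt) (by simpa using hg')

lemma tendsto_atBot_of_hasDerivAt_neg {f r : ℝ → ℝ} {a b : ℝ} (hf : ContinuousOn f (Ioo a b))
    (hneg : ∀ s ∈ Ioo a b, f s < 0) (hran : ∀ τ, r τ ∈ Ioo a b)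
    (hode : ∀ τ, HasDerivAt r (f (r τ)) τ) : Tendsto r atBot (𝓝 b) := by
  have hanti : Antitone r := antitone_of_hasDerivAt_nonpos hode fun τ => (hneg _ (hran τ)).le
  have hbdd : BddAbove (range r) := ⟨b, forall_mem_range.2 fun τ => (hran τ).2.le⟩
  have hL : Tendsto r atBot (𝓝 (⨆ τ, r τ)) := tendsto_atBot_ciSup hanti hbdd
  have haL : a < ⨆ τ, r τ := (hran 0).1.trans_le (le_ciSup hbdd 0)
  rcases (ciSup_le fun τ => (hran τ).2.le : ⨆ τ, r τ ≤ b).eq_or_lt with hLb | hLb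
  · rwa [← hLb]
  set L := ⨆ τ, r τ
  have hfL : f L < 0 := hneg L ⟨haL, hLb⟩
  have hfr : Tendsto (fun τ => f (r τ)) atBot (𝓝 (f L)) :=
    (hf.continuousAt (Ioo_mem_nhds haL hLb)).tendsto.comp hL
  obtain ⟨T, hT⟩ := eventually_atBot.1 (hfr.eventually_lt_const (by linarith : f L < f L / 2))
  obtain ⟨ε, hε, hεT⟩ : ∃ ε > 0, ∀ τ ≤ T, f (r τ) ≤ -ε :=
    ⟨-(f L / 2), by linarith, fun τ hτ => by linarith [hT τ hτ]⟩
  -- Going back in time from `T`, `r` grows at rate at least `ε`, so it cannot stay below `b`.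
  have hmono : MonotoneOn (fun τ => -r τ - ε * τ) (Iic T) :=
    monotoneOn_Iic_of_hasDerivAt_nonneg (g' := fun τ => -f (r τ) - ε)
      (fun τ _ => ((hode τ).neg.sub ((hasDerivAt_id' τ).const_mul ε)).congr_deriv (by ring))
      (fun τ hτ => by linarith [hεT τ hτ.le])
  have hdiv : 0 ≤ (b - a) / ε := div_nonneg (by linarith [(hran 0).1, (hran 0).2]) hε.le
  have hfar := hmono (by linarith : T - (b - a) / ε ≤ T) self_mem_Iic (by linarith)
  have hstep : ε * ((b - a) / ε) = b - a := mul_div_cancel₀ _ hε.ne'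
  simp only at hfar
  linarith [(hran (T - (b - a) / ε)).2, (hran T).1]

lemma le_mul_exp_of_mul_le_deriv {u u' : ℝ → ℝ} {k T : ℝ} (hu : ∀ τ ≤ T, HasDerivAt u (u' τ) τ)
    (hle : ∀ τ < T, k * u τ ≤ u' τ) : ∀ τ ≤ T, u τ ≤ u T * exp (k * (τ - T)) := by
  have hmono : MonotoneOn (fun τ => u τ * exp (-(k * τ))) (Iic T) :=
    monotoneOn_Iic_of_hasDerivAt_nonneg
      (g' := fun τ => (u' τ - k * u τ) * exp (-(k * τ)))
      (fun τ hτ => ((hu τ hτ).mul ((hasDerivAt_id' τ).const_mul k).neg.exp).congr_deriv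
        (by simp only [Pi.neg_apply]; ring))
      (fun τ hτ => mul_nonneg (sub_nonneg.2 (hle τ hτ)) (exp_pos _).le)
  intro τ hτ
  calc u τ = u τ * exp (-(k * τ)) * exp (k * τ) := by
        rw [mul_assoc, ← exp_add, neg_add_cancel, exp_zero, mul_one]
    _ ≤ u T * exp (-(k * T)) * exp (k * τ) :=
        mul_le_mul_of_nonneg_right (hmono hτ self_mem_Iic hτ) (exp_pos _).le
    _ = u T * exp (k * (τ - T)) := by
        rw [mul_assoc, ← exp_add]; ring_nf

lemma abs_sub_le_of_abs_deriv_le {v v' h h' : ℝ → ℝ} {T : ℝ}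
    (hv : ∀ τ ≤ T, HasDerivAt v (v' τ) τ) (hh : ∀ τ ≤ T, HasDerivAt h (h' τ) τ)
    (hle : ∀ τ < T, |v' τ| ≤ h' τ) : ∀ τ ≤ T, |v τ - v T| ≤ h T - h τ := by
  intro τ hτ
  have hsub := monotoneOn_Iic_of_hasDerivAt_nonneg (fun σ hσ => (hh σ hσ).sub (hv σ hσ))
    (fun σ hσ => by linarith [le_abs_self (v' σ), hle σ hσ]) hτ self_mem_Iic hτ
  have hadd := monotoneOn_Iic_of_hasDerivAt_nonneg (fun σ hσ => (hh σ hσ).add (hv σ hσ))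
    (fun σ hσ => by linarith [neg_abs_le (v' σ), hle σ hσ]) hτ self_mem_Iic hτ
  simp only [Pi.sub_apply, Pi.add_apply] at hsub hadd
  rw [abs_le]
  constructor <;> linarith

lemma exists_abs_log_sub_mul_sub_le {u u' : ℝ → ℝ} {κ K T : ℝ} (hκ : 0 < κ)
    (hu : ∀ τ ≤ T, 0 < u τ) (hderiv : ∀ τ ≤ T, HasDerivAt u (u' τ) τ)
    (hgrowth : ∀ τ ≤ T, κ / 2 * u τ ≤ u' τ) (hclose : ∀ τ ≤ T, |u' τ - κ * u τ| ≤ K * u τ ^ 2) :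
    ∃ B, ∀ τ ≤ T, |(log (u τ) - κ * τ) - (log (u T) - κ * T)| ≤ B := by
  have hK : 0 ≤ K :=
    nonneg_of_mul_nonneg_left ((abs_nonneg _).trans (hclose T le_rfl)) (pow_pos (hu T le_rfl) 2)
  -- `u` decays like `exp (κ τ / 2)`, so the error `O(u)` in `(log u)' = κ + O(u)` is integrable.
  have hdecay := le_mul_exp_of_mul_le_deriv hderiv fun τ hτ => hgrowth τ hτ.le
  set A := u T
  refine ⟨2 * K * A / κ, fun τ hτ => ?_⟩
  have hlog := abs_sub_le_of_abs_deriv_le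
    (v := fun σ => log (u σ) - κ * σ) (v' := fun σ => u' σ / u σ - κ)
    (h := fun σ => 2 * K * A / κ * exp (κ / 2 * (σ - T)))
    (h' := fun σ => K * A * exp (κ / 2 * (σ - T)))
    (fun σ hσ => (((hderiv σ hσ).log (hu σ hσ).ne').sub
      ((hasDerivAt_id' σ).const_mul κ)).congr_deriv (by ring))
    (fun σ _ => ((((hasDerivAt_id' σ).sub_const T).const_mul (κ / 2)).exp.const_mul _).congr_deriv
      (by field_simp))
    (fun σ hσ => ?_) τ hτ
  · simp only [sub_self, mul_zero, exp_zero, mul_one] at hlog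
    have : 0 ≤ 2 * K * A / κ * exp (κ / 2 * (τ - T)) := by
      have := hu T le_rfl
      positivity
    linarith
  · have hpos := hu σ hσ.le
    calc |u' σ / u σ - κ| = |u' σ - κ * u σ| / u σ := by
          rw [div_sub' hpos.ne', abs_div, abs_of_pos hpos, mul_comm]
      _ ≤ K * u σ ^ 2 / u σ := by gcongr; exact hclose σ hσ.le
      _ = K * u σ := by field_simp
      _ ≤ K * (A * exp (κ / 2 * (σ - T))) := mul_le_mul_of_nonneg_left (hdecay σ hσ.le) hK
      _ = K * A * exp (κ / 2 * (σ - T)) := by ring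

lemma exists_exp_bounds_of_abs_deriv_sub_mul_le_sq {u u' : ℝ → ℝ} {κ K T : ℝ} (hκ : 0 < κ)
    (hu : ∀ τ ≤ T, 0 < u τ) (hderiv : ∀ τ ≤ T, HasDerivAt u (u' τ) τ)
    (hclose : ∀ τ ≤ T, |u' τ - κ * u τ| ≤ K * u τ ^ 2) (hsmall : ∀ τ ≤ T, K * u τ ≤ κ / 2) :
    ∃ c C, 0 < c ∧ c ≤ C ∧ ∀ τ ≤ T,
      c * exp (κ * τ) ≤ u τ ∧ u τ ≤ C * exp (κ * τ) ∧
      c * exp (κ * τ) ≤ u' τ ∧ u' τ ≤ C * exp (κ * τ) := by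
  have hu' : ∀ τ ≤ T, κ / 2 * u τ ≤ u' τ ∧ u' τ ≤ 3 * κ / 2 * u τ := by
    intro τ hτ
    obtain ⟨h₁, h₂⟩ := abs_le.1 (hclose τ hτ)
    have := mul_le_mul_of_nonneg_right (hsmall τ hτ) (hu τ hτ).le
    constructor <;> nlinarith
  obtain ⟨B, hB⟩ := exists_abs_log_sub_mul_sub_le hκ hu hderiv (fun τ hτ => (hu' τ hτ).1) hclose
  set v := log (u T) - κ * T
  have hu_exp : ∀ τ ≤ T,
      exp (v - B) * exp (κ * τ) ≤ u τ ∧ u τ ≤ exp (v + B) * exp (κ * τ) := by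
    intro τ hτ
    obtain ⟨h₁, h₂⟩ := abs_le.1 (hB τ hτ)
    rw [← exp_log (hu τ hτ), ← exp_add, ← exp_add]
    exact ⟨exp_le_exp.2 (by linarith), exp_le_exp.2 (by linarith)⟩
  have hB₀ : 0 ≤ B := (abs_nonneg _).trans (hB T le_rfl)
  refine ⟨min 1 (κ / 2) * exp (v - B), max 1 (3 * κ / 2) * exp (v + B), by positivity,
    mul_le_mul ((min_le_left _ _).trans (le_max_left _ _)) (exp_le_exp.2 (by linarith))
      (exp_pos _).le (by positivity), fun τ hτ => ?_⟩
  obtain ⟨hu₁, hu₂⟩ := hu_exp τ hτ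
  obtain ⟨hu'₁, hu'₂⟩ := hu' τ hτ
  have hE₁ : 0 ≤ exp (v - B) * exp (κ * τ) := by positivity
  have hE₂ : 0 ≤ exp (v + B) * exp (κ * τ) := by positivity
  simp only [mul_assoc]
  refine ⟨?_, ?_, ?_, ?_⟩
  · nlinarith [mul_le_mul_of_nonneg_right (min_le_left 1 (κ / 2)) hE₁]
  · nlinarith [mul_le_mul_of_nonneg_right (le_max_left 1 (3 * κ / 2)) hE₂]
  · nlinarith [mul_le_mul_of_nonneg_right (min_le_right 1 (κ / 2)) hE₁]
  · nlinarith [mul_le_mul_of_nonneg_right (le_max_right 1 (3 * κ / 2)) hE₂]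

theorem stmt9 (rm rp : ℝ) (hlt : rm < rp) (f : ℝ → ℝ)
    (hf : ContDiffOn ℝ 2 f (Set.Icc rm rp))
    (hfp : f rp = 0)
    (hneg : ∀ s ∈ Set.Ioo rm rp, f s < 0)
    (hdp : derivWithin f (Set.Icc rm rp) rp ≠ 0)
    (r : ℝ → ℝ) (hran : ∀ τ : ℝ, r τ ∈ Set.Ioo rm rp)
    (hode : ∀ τ : ℝ, HasDerivAt r (f (r τ)) τ) :
    ∃ τL ≥ (0 : ℝ), ∃ c C : ℝ, 0 < c ∧ c ≤ C ∧
      ∀ τ : ℝ, τ < -τL →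
        c * Real.exp (2 * (1 / 2 * derivWithin f (Set.Icc rm rp) rp) * τ) ≤ rp - r τ ∧
        rp - r τ ≤ C * Real.exp (2 * (1 / 2 * derivWithin f (Set.Icc rm rp) rp) * τ) ∧
        c * Real.exp (2 * (1 / 2 * derivWithin f (Set.Icc rm rp) rp) * τ) ≤ -f (r τ) ∧
        -f (r τ) ≤ C * Real.exp (2 * (1 / 2 * derivWithin f (Set.Icc rm rp) rp) * τ) := by
  obtain ⟨M, hM⟩ := exists_abs_sub_sub_derivWithin_mul_le_sq hlt hf
  set κ := derivWithin f (Icc rm rp) rp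
  have hκ : 0 < κ := by
    refine lt_of_le_of_ne (IsMaxOn.nonneg_of_hasDerivWithinAt_Ioo hlt
      (isMaxOn_iff.2 fun s hs => hfp ▸ (hneg s hs).le) ?_) hdp.symm
    exact ((hf.differentiableOn two_ne_zero rp (right_mem_Icc.2 hlt.le)).hasDerivWithinAt).mono
      Ioo_subset_Icc_self
  have hr : Tendsto r atBot (𝓝 rp) :=
    tendsto_atBot_of_hasDerivAt_neg (hf.continuousOn.mono Ioo_subset_Icc_self) hneg hran hode
  have hMu : Tendsto (fun τ => M * (rp - r τ)) atBot (𝓝 0) := by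
    simpa using (hr.const_sub rp).const_mul M
  obtain ⟨T, hT⟩ := eventually_atBot.1 (hMu.eventually_le_const (half_pos hκ))
  obtain ⟨c, C, hc, hcC, hbounds⟩ := exists_exp_bounds_of_abs_deriv_sub_mul_le_sq
    (u := fun τ => rp - r τ) (u' := fun τ => -f (r τ)) hκ
    (fun τ _ => sub_pos.2 (hran τ).2) (fun τ _ => (hode τ).const_sub rp)
    (fun τ _ => by
      have := hM (r τ) (Ioo_subset_Icc_self (hran τ))
      rw [hfp, ← abs_neg] at this
      convert this using 2 <;> ring) hT
  refine ⟨max 0 (-T), le_max_left _ _, c, C, hc, hcC, fun τ hτ => ?_⟩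
  rw [show 2 * (1 / 2 * κ) * τ = κ * τ by ring]
  exact hbounds τ (by linarith [le_max_right 0 (-T)])
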